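/- arXiv:2409.12588 — 4 statements merged into one kernel-verified Lean document; each statement's English description precedes it below -/
import Mathlib

section
/- For a fixed h ∈ (0,1), the function F(a,h) = a^{-2} cosh²(ah) + h², viewed as a function of a > 0, is strictly convex in a and tends to +∞ both as a → 0⁺ and as a → +∞; consequently the equation F(a,h) = 1 has at most two solutions a > 0. -/
open Real Set Filter

private lemma aux_hd1 (h a : ℝ) (ha : a ≠ 0) :
    HasDerivAt (fun x : ℝ => Real.cosh (x*h)^2 / x^2 + h^2)
      ((2*h*Real.sinh (a*h)*Real.cosh (a*h)*a - 2*Real.cosh (a*h)^2)/a^3) a := by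
  have h1 : HasDerivAt (fun x : ℝ => x*h) h a := by
    simpa using (hasDerivAt_id a).mul_const h
  have h2 : HasDerivAt (fun x : ℝ => Real.cosh (x*h)) (Real.sinh (a*h) * h) a :=
    by have := (Real.hasDerivAt_cosh (a*h)).comp a h1; exact this
  have h3 := h2.pow 2
  have h4 : HasDerivAt (fun x : ℝ => x^2) (2*a) a := by simpa using hasDerivAt_pow 2 a
  have h5 := (h3.div h4 (pow_ne_zero 2 ha)).add_const (h^2)
  refine h5.congr_deriv ?_
  simp only [Pi.pow_apply, Pi.mul_apply, Pi.sub_apply, id]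
  field_simp
  ring

private lemma aux_hd2 (h a : ℝ) (ha : a ≠ 0) :
    HasDerivAt (fun x : ℝ => (2*h*Real.sinh (x*h)*Real.cosh (x*h)*x - 2*Real.cosh (x*h)^2)/x^3)
      ((2*h^2*(Real.cosh (a*h)^2+Real.sinh (a*h)^2)*a^2
        - 8*h*Real.sinh (a*h)*Real.cosh (a*h)*a + 6*Real.cosh (a*h)^2)/a^4) a := by
  have h1 : HasDerivAt (fun x : ℝ => x*h) h a := by
    simpa using (hasDerivAt_id a).mul_const h
  have h2 : HasDerivAt (fun x : ℝ => Real.cosh (x*h)) (Real.sinh (a*h) * h) a :=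
    by have := (Real.hasDerivAt_cosh (a*h)).comp a h1; exact this
  have hs : HasDerivAt (fun x : ℝ => Real.sinh (x*h)) (Real.cosh (a*h) * h) a :=
    by have := (Real.hasDerivAt_sinh (a*h)).comp a h1; exact this
  have h6 := (((hs.const_mul (2*h)).mul h2).mul (hasDerivAt_id a)).sub ((h2.pow 2).const_mul 2)
  have h7 := h6.div (hasDerivAt_pow 3 a) (pow_ne_zero 3 ha)
  refine h7.congr_deriv ?_
  simp only [Pi.pow_apply, Pi.mul_apply, Pi.sub_apply, id]
  field_simp
  ring

private lemma aux_cosh_lb (x : ℝ) (hx : 0 ≤ x) : 1 + x^2/2 ≤ Real.cosh x := by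
  have h1 : Real.cosh x = 1 + 2 * Real.sinh (x/2)^2 := by
    have h0 := Real.cosh_two_mul (x/2)
    rw [Real.cosh_sq] at h0
    rw [show x = 2*(x/2) by ring, h0]; ring
  have h2 : x/2 ≤ Real.sinh (x/2) := by
    rcases eq_or_lt_of_le hx with heq|hlt
    · simp [← heq]
    · exact (Real.self_lt_sinh_iff.2 (by linarith)).le
  nlinarith [Real.sinh_nonneg_iff.2 (by linarith : (0:ℝ) ≤ x/2)]

private lemma aux_three {f : ℝ → ℝ} (hf : StrictConvexOn ℝ (Set.Ioi 0) f) {x y z : ℝ}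
    (hx : 0 < x) (hz : 0 < z) (hxy : x < y) (hyz : y < z)
    (e1 : f x = 1) (e2 : f y = 1) (e3 : f z = 1) : False := by
  have hlt := hf.lt_on_openSegment (Set.mem_Ioi.2 hx) (Set.mem_Ioi.2 hz)
    (by linarith : x ≠ z)
    (by rw [openSegment_eq_Ioo (by linarith : x < z)]; exact ⟨hxy, hyz⟩)
  rw [e1, e2, e3] at hlt
  simp at hlt

/-- For fixed `h ∈ (0,1)`, the function `F(a,h) = a⁻² cosh²(ah) + h²` is strictly convex
in `a` on `(0,∞)`, tends to `+∞` as `a → 0⁺` and as `a → +∞`; consequently the equation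
`F(a,h) = 1` has at most two solutions `a > 0`. -/
theorem stmt0 (h : ℝ) (hh : h ∈ Set.Ioo (0:ℝ) 1) :
    StrictConvexOn ℝ (Set.Ioi 0) (fun a : ℝ => Real.cosh (a*h)^2 / a^2 + h^2) ∧
    Filter.Tendsto (fun a : ℝ => Real.cosh (a*h)^2 / a^2 + h^2)
      (nhdsWithin 0 (Set.Ioi 0)) Filter.atTop ∧
    Filter.Tendsto (fun a : ℝ => Real.cosh (a*h)^2 / a^2 + h^2) Filter.atTop Filter.atTop ∧
    {a : ℝ | 0 < a ∧ Real.cosh (a*h)^2 / a^2 + h^2 = 1}.encard ≤ 2 := by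
  obtain ⟨hh0, hh1⟩ := hh
  -- Part 1: strict convexity
  have hconv : StrictConvexOn ℝ (Set.Ioi 0)
      (fun a : ℝ => Real.cosh (a*h)^2 / a^2 + h^2) := by
    apply strictConvexOn_of_deriv2_pos (convex_Ioi 0)
    · intro x hx
      exact (aux_hd1 h x (ne_of_gt hx)).continuousAt.continuousWithinAt
    · intro x hx
      rw [interior_Ioi] at hx
      have hx0 : (0:ℝ) < x := hx
      have hderiv : deriv (fun a : ℝ => Real.cosh (a*h)^2 / a^2 + h^2) =ᶠ[nhds x]
          (fun a : ℝ => (2*h*Real.sinh (a*h)*Real.cosh (a*h)*a - 2*Real.cosh (a*h)^2)/a^3) := by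
        filter_upwards [Ioi_mem_nhds hx0] with y hy
        exact (aux_hd1 h y (ne_of_gt hy)).deriv
      have h2eq : (deriv^[2] (fun a : ℝ => Real.cosh (a*h)^2 / a^2 + h^2)) x
          = (2*h^2*(Real.cosh (x*h)^2+Real.sinh (x*h)^2)*x^2
            - 8*h*Real.sinh (x*h)*Real.cosh (x*h)*x + 6*Real.cosh (x*h)^2)/x^4 := by
        show deriv (deriv (fun a : ℝ => Real.cosh (a*h)^2 / a^2 + h^2)) x = _
        rw [hderiv.deriv_eq]
        exact (aux_hd2 h x (ne_of_gt hx0)).deriv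
      rw [h2eq]
      apply div_pos _ (by positivity)
      have key := Real.cosh_sq_sub_sinh_sq (x*h)
      nlinarith [sq_nonneg (x*h*Real.cosh (x*h) - Real.sinh (x*h)),
        sq_nonneg (x*h*Real.sinh (x*h) - Real.cosh (x*h)),
        sq_nonneg (Real.cosh (x*h))]
  refine ⟨hconv, ?_, ?_, ?_⟩
  -- Part 2: a → 0⁺
  · have hsq : Filter.Tendsto (fun a : ℝ => (a^2)⁻¹) (nhdsWithin 0 (Set.Ioi 0)) Filter.atTop := by
      apply tendsto_inv_nhdsGT_zero.comp
      apply tendsto_nhdsWithin_of_tendsto_nhds_of_eventually_within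
      · simpa using ((continuous_pow 2).tendsto (0:ℝ)).mono_left nhdsWithin_le_nhds
      · filter_upwards [self_mem_nhdsWithin] with a ha
        exact pow_pos (Set.mem_Ioi.1 ha) 2
    apply tendsto_atTop_mono' _ _ hsq
    filter_upwards [self_mem_nhdsWithin] with a (ha : 0 < a)
    have h1 : 1 ≤ Real.cosh (a*h)^2 := by nlinarith [Real.one_le_cosh (a*h)]
    have h2 : (a^2)⁻¹ ≤ Real.cosh (a*h)^2 / a^2 := by
      rw [inv_eq_one_div]
      gcongr
    nlinarith [sq_nonneg h]
  -- Part 3: a → ∞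
  · have hpoly : Filter.Tendsto (fun a : ℝ => h^4/4 * a^2) Filter.atTop Filter.atTop :=
      (tendsto_pow_atTop (two_ne_zero)).const_mul_atTop (by positivity)
    apply tendsto_atTop_mono' _ _ hpoly
    filter_upwards [Filter.eventually_gt_atTop 0] with a ha
    have hb := aux_cosh_lb (a*h) (by positivity)
    have hc : h^4/4 * a^2 ≤ Real.cosh (a*h)^2 / a^2 := by
      rw [le_div_iff₀ (by positivity)]
      nlinarith [Real.cosh_pos (a*h), sq_nonneg (a*h)]
    nlinarith [sq_nonneg h]
  -- Part 4: at most two solutions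
  · by_contra hlt
    push_neg at hlt
    have h3le : (3:ℕ∞) ≤ {a : ℝ | 0 < a ∧ Real.cosh (a*h)^2 / a^2 + h^2 = 1}.encard := by
      have := Order.add_one_le_of_lt hlt
      norm_num at this ⊢
      exact this
    obtain ⟨t, hts, ht3⟩ := Set.exists_subset_encard_eq h3le
    rw [Set.encard_eq_three] at ht3
    obtain ⟨x, y, z, hxy, hxz, hyz, rfl⟩ := ht3
    have hX := hts (show x ∈ ({x,y,z} : Set ℝ) by simp)
    have hY := hts (show y ∈ ({x,y,z} : Set ℝ) by simp)
    have hZ := hts (show z ∈ ({x,y,z} : Set ℝ) by simp)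
    obtain ⟨hx0, hx1⟩ := hX
    obtain ⟨hy0, hy1⟩ := hY
    obtain ⟨hz0, hz1⟩ := hZ
    rcases (Ne.lt_or_gt hxy) with h1|h1 <;> rcases (Ne.lt_or_gt hyz) with h2|h2 <;>
      rcases (Ne.lt_or_gt hxz) with h3|h3
    · exact aux_three hconv hx0 hz0 h1 h2 hx1 hy1 hz1
    · linarith
    · exact aux_three hconv hx0 hy0 h3 h2 hx1 hz1 hy1
    · exact aux_three hconv hz0 hy0 h3 h1 hz1 hx1 hy1
    · exact aux_three hconv hy0 hz0 h1 h3 hy1 hx1 hz1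
    · exact aux_three hconv hy0 hx0 h2 h3 hy1 hz1 hx1
    · linarith
    · exact aux_three hconv hz0 hx0 h2 h1 hz1 hy1 hx1
end

section
/- The function f(s) = 2π (s + sinh(s)cosh(s)) / (cosh(s)² + s²) is nondecreasing on ℝ: its derivative equals f'(s) = 4π ((cosh(s) − s·sinh(s)) / (cosh(s)² + s²))², which is nonnegative for all s. -/
open Real

lemma hDpos (s : ℝ) : 0 < Real.cosh s ^ 2 + s ^ 2 := by
  have := Real.cosh_pos (x := s)
  positivity

lemma keyderiv (s : ℝ) : HasDerivAt
      (fun s : ℝ => 2*Real.pi*(s + Real.sinh s * Real.cosh s)/(Real.cosh s^2 + s^2))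
      (4*Real.pi*((Real.cosh s - s*Real.sinh s)/(Real.cosh s^2 + s^2))^2) s := by
  have hD := hDpos s
  have hnum : HasDerivAt (fun s : ℝ => 2*Real.pi*(s + Real.sinh s * Real.cosh s))
      (2*Real.pi*(1 + (Real.cosh s * Real.cosh s + Real.sinh s * Real.sinh s))) s := by
    exact (((hasDerivAt_id s).add ((Real.hasDerivAt_sinh s).mul (Real.hasDerivAt_cosh s))).const_mul
      (2*Real.pi))
  have hden : HasDerivAt (fun s : ℝ => Real.cosh s ^ 2 + s ^ 2)
      (2 * Real.cosh s * Real.sinh s + 2 * s) s := by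
    have h1 : HasDerivAt (fun s : ℝ => Real.cosh s ^ 2)
        (2 * Real.cosh s ^ 1 * Real.sinh s) s := (Real.hasDerivAt_cosh s).pow 2
    have h2 : HasDerivAt (fun s : ℝ => s ^ 2) (2 * s ^ 1) s := by
      simpa using (hasDerivAt_id s).fun_pow 2
    simpa using h1.fun_add h2
  have := hnum.fun_div hden (ne_of_gt hD)
  refine this.congr_deriv ?_
  symm
  have hcs : Real.cosh s ^ 2 = Real.sinh s ^ 2 + 1 := Real.cosh_sq s
  have hne : (Real.cosh s^2 + s^2) ≠ 0 := ne_of_gt hD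
  rw [div_pow, ← mul_div_assoc, div_eq_div_iff (by positivity) (by positivity)]
  linear_combination (-2*Real.pi*(Real.cosh s^2 + s^2)*(Real.cosh s^2 + s^2)^2) * hcs

/-- The function `f(s) = 2π (s + sinh s cosh s)/(cosh² s + s²)` has derivative
`4π ((cosh s − s sinh s)/(cosh² s + s²))² ≥ 0` everywhere, and is nondecreasing. -/
theorem stmt1 :
    (∀ s : ℝ, HasDerivAt
      (fun s : ℝ => 2*Real.pi*(s + Real.sinh s * Real.cosh s)/(Real.cosh s^2 + s^2))
      (4*Real.pi*((Real.cosh s - s*Real.sinh s)/(Real.cosh s^2 + s^2))^2) s) ∧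
    (∀ s : ℝ, 0 ≤ 4*Real.pi*((Real.cosh s - s*Real.sinh s)/(Real.cosh s^2 + s^2))^2) ∧
    Monotone (fun s : ℝ =>
      2*Real.pi*(s + Real.sinh s * Real.cosh s)/(Real.cosh s^2 + s^2)) := by
  refine ⟨keyderiv, fun s => by positivity, ?_⟩
  apply monotone_of_deriv_nonneg
  · exact fun s => (keyderiv s).differentiableAt
  · intro s
    rw [(keyderiv s).deriv]
    positivity
end

section
/- There exists a unique pair (a*, h*) with a* > 1 and h* ∈ (0,1) satisfying simultaneously a*·h*·tanh(a*·h*) = 1 and a*^{-2}·cosh(a*·h*)² + h*² = 1. -/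
open Real

/-- tanh is positive for positive arguments. -/
lemma my_tanh_pos {x : ℝ} (hx : 0 < x) : 0 < Real.tanh x := by
  rw [Real.tanh_eq_sinh_div_cosh]
  exact div_pos (Real.sinh_pos_iff.mpr hx) (Real.cosh_pos x)

/-- tanh is strictly monotone. -/
lemma my_tanh_lt {x y : ℝ} (hxy : x < y) : Real.tanh x < Real.tanh y := by
  rw [Real.tanh_eq_sinh_div_cosh, Real.tanh_eq_sinh_div_cosh,
    div_lt_div_iff₀ (Real.cosh_pos x) (Real.cosh_pos y)]
  have := Real.sinh_neg_iff.mpr (sub_neg.mpr hxy)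
  rw [Real.sinh_sub] at this
  linarith

/-- t ↦ t * tanh t is strictly monotone on nonnegative reals. -/
lemma my_mul_tanh_lt {x y : ℝ} (hx : 0 ≤ x) (hxy : x < y) :
    x * Real.tanh x < y * Real.tanh y := by
  rcases eq_or_lt_of_le hx with rfl | hx'
  · simpa [Real.tanh_zero] using mul_pos (hx.trans_lt hxy) (my_tanh_pos hxy)
  · exact mul_lt_mul hxy (my_tanh_lt hxy).le (my_tanh_pos hx') (by linarith)

lemma my_tanh_lt_one (x : ℝ) : Real.tanh x < 1 := by
  rw [Real.tanh_eq_sinh_div_cosh, div_lt_one (Real.cosh_pos x)]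
  exact Real.sinh_lt_cosh x

lemma my_half_lt_tanh_two : (1:ℝ) / 2 < Real.tanh 2 := by
  rw [Real.tanh_eq_sinh_div_cosh, div_lt_div_iff₀ two_pos (Real.cosh_pos 2),
    Real.sinh_eq, Real.cosh_eq]
  have h1 : (3:ℝ) < Real.exp 2 := by linarith [Real.add_one_lt_exp (two_ne_zero (α := ℝ))]
  have h2 : Real.exp (-2) < 1 := Real.exp_lt_one_iff.mpr (by norm_num)
  have h3 : 0 < Real.exp (-2) := Real.exp_pos _
  nlinarith

/-- There is a unique pair `(a*, h*)` with `a* > 1`, `h* ∈ (0,1)` satisfying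
`a* h* tanh(a* h*) = 1` (orthogonality) and `a*⁻² cosh²(a* h*) + h*² = 1` (minimality). -/
theorem stmt4 :
    ∃! p : ℝ × ℝ, 1 < p.1 ∧ p.2 ∈ Set.Ioo (0:ℝ) 1 ∧
      p.1 * p.2 * Real.tanh (p.1 * p.2) = 1 ∧
      Real.cosh (p.1 * p.2)^2 / p.1^2 + p.2^2 = 1 := by
  -- the function t ↦ t tanh t
  set f : ℝ → ℝ := fun t => t * Real.tanh t with hf
  have hcont : Continuous f := by
    have : f = fun t => t * (Real.sinh t / Real.cosh t) := by
      funext t; show t * Real.tanh t = _; rw [Real.tanh_eq_sinh_div_cosh]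
    rw [this]
    exact continuous_id.mul (Real.continuous_sinh.div Real.continuous_cosh
      fun t => (Real.cosh_pos t).ne')
  -- existence of t ∈ [1,2] with t tanh t = 1
  have hmem : (1:ℝ) ∈ Set.Icc (f 1) (f 2) := by
    constructor
    · have := my_tanh_lt_one 1
      simp only [hf, one_mul]
      linarith
    · have := my_half_lt_tanh_two
      simp only [hf]
      linarith
  obtain ⟨t, ht12, htt⟩ := intermediate_value_Icc (by norm_num : (1:ℝ) ≤ 2)
    hcont.continuousOn hmem
  have ht0 : 0 < t := lt_of_lt_of_le one_pos ht12.1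
  have htt' : t * Real.tanh t = 1 := htt
  -- injectivity of f on nonnegatives
  have hinj : ∀ s : ℝ, 0 < s → s * Real.tanh s = 1 → s = t := by
    intro s hs hs1
    rcases lt_trichotomy s t with h | h | h
    · have := my_mul_tanh_lt hs.le h; rw [hs1, htt'] at this; linarith
    · exact h
    · have := my_mul_tanh_lt ht0.le h; rw [hs1, htt'] at this; linarith
  set c := Real.cosh t with hc
  have hc1 : 1 < c := Real.one_lt_cosh.mpr ht0.ne'
  set b := Real.sqrt (c ^ 2 + t ^ 2) with hb
  have hbsq : b ^ 2 = c ^ 2 + t ^ 2 := Real.sq_sqrt (by positivity)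
  have hb1 : 1 < b := by
    rw [hb]
    rw [show (1:ℝ) = Real.sqrt 1 by simp]
    apply Real.sqrt_lt_sqrt (by norm_num)
    nlinarith
  have hb0 : 0 < b := lt_trans one_pos hb1
  refine ⟨(b, t / b), ⟨hb1, ⟨by positivity, ?_⟩, ?_, ?_⟩, ?_⟩
  · -- t / b < 1
    rw [div_lt_one hb0]
    nlinarith
  · -- orthogonality
    have : b * (t / b) = t := by field_simp
    rw [this, htt']
  · -- minimality
    have h1 : b * (t / b) = t := by field_simp
    simp only [h1, ← hc]
    field_simp
    nlinarith
  · -- uniqueness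
    rintro ⟨a, h⟩ ⟨ha1, ⟨hh0, hh1⟩, he1, he2⟩
    simp only at ha1 hh0 hh1 he1 he2 ⊢
    have ha0 : 0 < a := lt_trans one_pos ha1
    have hs0 : 0 < a * h := mul_pos ha0 hh0
    have hst : a * h = t := hinj _ hs0 he1
    rw [hst] at he2
    -- from he2 : c^2 / a^2 + h^2 = 1 with a = t / h
    have ha : a = t / h := by field_simp [← hst]; exact hst
    rw [ha] at he2
    have hhsq : h ^ 2 * (c ^ 2 + t ^ 2) = t ^ 2 := by
      rw [← hc] at he2
      field_simp at he2
      nlinarith [he2]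
    have hh : h = t / b := by
      have h2 : h ^ 2 = (t / b) ^ 2 := by
        rw [div_pow, hbsq]
        field_simp
        nlinarith
      have hpos : 0 < t / b := div_pos ht0 hb0
      have := congrArg Real.sqrt h2
      rwa [Real.sqrt_sq hh0.le, Real.sqrt_sq hpos.le] at this
    have hha : a = b := by
      rw [ha, hh]
      field_simp
    exact Prod.ext hha hh
end

section
/- For any a > 0 and h ∈ (0,1), the area 2π ∫_{−h}^{h} r_a(z)·√(r_a'(z)² + 1) dz of the rescaled catenoidal annulus K_{a,h} tends to 4π·h·√(1−h²) as a → 0⁺, and 4π·h·√(1−h²) ≤ 2π for all h ∈ (0,1). -/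
open Real Filter Set

/-- The area `2π ∫_{−h}^h r_a √((r_a')² + 1) dz` of the annulus `K_{a,h}` tends to
`4π h √(1−h²)` as `a → 0⁺`, and `4π h √(1−h²) ≤ 2π` for all `h ∈ (0,1)`. -/
theorem stmt8 (h : ℝ) (hh : h ∈ Set.Ioo (0:ℝ) 1) :
    Filter.Tendsto (fun a : ℝ =>
      2*Real.pi * ∫ z in (-h)..h,
        (Real.cosh (a*z) * Real.sqrt (1 - h^2) / Real.cosh (a*h)) *
        Real.sqrt ((deriv (fun w : ℝ =>
          Real.cosh (a*w) * Real.sqrt (1 - h^2) / Real.cosh (a*h)) z)^2 + 1))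
      (nhdsWithin 0 (Set.Ioi 0)) (nhds (4*Real.pi*h*Real.sqrt (1 - h^2))) ∧
    4*Real.pi*h*Real.sqrt (1 - h^2) ≤ 2*Real.pi := by
  obtain ⟨h0, h1⟩ := hh
  set c := Real.sqrt (1 - h^2) with hc
  have hc0 : 0 ≤ c := Real.sqrt_nonneg _
  have hcsq : c^2 = 1 - h^2 := Real.sq_sqrt (by nlinarith)
  have hc1 : c ≤ 1 := by nlinarith [sq_nonneg c]
  have hderiv : ∀ a z : ℝ, deriv (fun w : ℝ => Real.cosh (a*w) * c / Real.cosh (a*h)) z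
      = a * Real.sinh (a*z) * c / Real.cosh (a*h) := by
    intro a z
    have hid : HasDerivAt (fun w : ℝ => a * w) a z := by
      simpa using (hasDerivAt_id z).const_mul a
    have H : HasDerivAt (fun w : ℝ => Real.cosh (a*w) * c / Real.cosh (a*h))
        (Real.sinh (a*z) * a * c / Real.cosh (a*h)) z :=
      ((hid.cosh).mul_const c).div_const _
    rw [H.deriv]; ring
  constructor
  · have key : Tendsto (fun a : ℝ => ∫ z in (-h)..h,
        (Real.cosh (a*z) * c / Real.cosh (a*h)) *
        Real.sqrt ((a * Real.sinh (a*z) * c / Real.cosh (a*h))^2 + 1))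
        (nhdsWithin 0 (Set.Ioi 0)) (nhds (∫ _ in (-h)..h, c)) := by
      apply intervalIntegral.tendsto_integral_filter_of_dominated_convergence
        (bound := fun _ => Real.cosh 1 * Real.sqrt ((Real.sinh 1)^2 + 1))
      · filter_upwards with a
        apply Continuous.aestronglyMeasurable
        have hcont : Continuous (fun z : ℝ => Real.cosh (a*z) * c / Real.cosh (a*h)) :=
          ((Real.continuous_cosh.comp (continuous_const.mul continuous_id)).mul
            continuous_const).div_const _
        have hcont2 : Continuous (fun z : ℝ => a * Real.sinh (a*z) * c / Real.cosh (a*h)) :=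
          (((continuous_const.mul (Real.continuous_sinh.comp
            (continuous_const.mul continuous_id)))).mul continuous_const).div_const _
        exact hcont.mul ((hcont2.pow 2).add continuous_const).sqrt
      · filter_upwards [Ioc_mem_nhdsGT (one_pos : (0:ℝ) < 1)]
          with a ha
        refine MeasureTheory.ae_of_all _ (fun z hz => ?_)
        obtain ⟨ha0, ha1⟩ := ha
        have hz' : |z| ≤ h := by
          rw [Set.uIoc_of_le (by linarith : -h ≤ h)] at hz
          rw [abs_le]; exact ⟨le_of_lt hz.1, hz.2⟩
        have haz : |a*z| ≤ 1 := by
          rw [abs_mul, abs_of_pos ha0]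
          calc a * |z| ≤ 1 * 1 := by
                apply mul_le_mul ha1 (hz'.trans h1.le) (abs_nonneg _) zero_le_one
            _ = 1 := by ring
        have hch : (1:ℝ) ≤ Real.cosh (a*h) := Real.one_le_cosh _
        have e1 : Real.cosh (a*z) * c / Real.cosh (a*h) ≤ Real.cosh 1 := by
          have hnum : Real.cosh (a*z) * c ≤ Real.cosh 1 := by
            calc Real.cosh (a*z) * c ≤ Real.cosh 1 * 1 := by
                  apply mul_le_mul _ hc1 hc0 (Real.cosh_pos 1).le
                  rw [← Real.cosh_abs, ← Real.cosh_abs 1]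
                  exact Real.cosh_le_cosh.mpr (by simpa using haz)
              _ = Real.cosh 1 := by ring
          calc Real.cosh (a*z) * c / Real.cosh (a*h) ≤ Real.cosh (a*z) * c / 1 := by
                apply div_le_div_of_nonneg_left _ one_pos hch
                positivity
            _ ≤ Real.cosh 1 := by simpa using hnum
        have habs : |a * Real.sinh (a*z) * c / Real.cosh (a*h)| ≤ Real.sinh 1 := by
          have hs : |Real.sinh (a*z)| ≤ Real.sinh 1 := by
            rw [Real.abs_sinh]
            exact Real.sinh_le_sinh.mpr haz
          have hs1 : 0 ≤ Real.sinh 1 := by positivity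
          rw [abs_div, abs_mul, abs_mul, abs_of_pos ha0,
            abs_of_nonneg hc0, abs_of_pos (Real.cosh_pos _)]
          calc a * |Real.sinh (a*z)| * c / Real.cosh (a*h)
              ≤ a * |Real.sinh (a*z)| * c / 1 := by
                apply div_le_div_of_nonneg_left _ one_pos hch
                positivity
            _ = a * |Real.sinh (a*z)| * c := by ring
            _ ≤ 1 * Real.sinh 1 * 1 := by
                apply mul_le_mul _ hc1 hc0 (by positivity)
                exact mul_le_mul ha1 hs (abs_nonneg _) zero_le_one
            _ = Real.sinh 1 := by ring
        have e2 : Real.sqrt ((a * Real.sinh (a*z) * c / Real.cosh (a*h))^2 + 1)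
            ≤ Real.sqrt ((Real.sinh 1)^2 + 1) := by
          apply Real.sqrt_le_sqrt
          have := abs_le.mp habs
          nlinarith [this.1, this.2]
        rw [Real.norm_eq_abs, abs_of_nonneg (by positivity)]
        apply mul_le_mul e1 e2 (Real.sqrt_nonneg _) (Real.cosh_pos 1).le
      · exact intervalIntegrable_const
      · refine MeasureTheory.ae_of_all _ (fun z _ => ?_)
        have hcont : Continuous (fun a : ℝ => (Real.cosh (a*z) * c / Real.cosh (a*h)) *
            Real.sqrt ((a * Real.sinh (a*z) * c / Real.cosh (a*h))^2 + 1)) := by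
          have h1' : Continuous (fun a : ℝ => Real.cosh (a*z) * c / Real.cosh (a*h)) :=
            Continuous.div ((Real.continuous_cosh.comp (continuous_id.mul continuous_const)).mul
              continuous_const)
              (Real.continuous_cosh.comp (continuous_id.mul continuous_const))
              (fun a => (Real.cosh_pos _).ne')
          have h2' : Continuous (fun a : ℝ => a * Real.sinh (a*z) * c / Real.cosh (a*h)) :=
            Continuous.div ((continuous_id.mul (Real.continuous_sinh.comp
              (continuous_id.mul continuous_const))).mul continuous_const)
              (Real.continuous_cosh.comp (continuous_id.mul continuous_const))
              (fun a => (Real.cosh_pos _).ne')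
          exact h1'.mul ((h2'.pow 2).add continuous_const).sqrt
        have := (hcont.tendsto 0).mono_left
          (nhdsWithin_le_nhds (s := Set.Ioi (0:ℝ)))
        simpa using this
    have key2 := key.const_mul (2*Real.pi)
    have heq : (fun a : ℝ =>
        2*Real.pi * ∫ z in (-h)..h,
          (Real.cosh (a*z) * c / Real.cosh (a*h)) *
          Real.sqrt ((deriv (fun w : ℝ =>
            Real.cosh (a*w) * c / Real.cosh (a*h)) z)^2 + 1)) =
      (fun a : ℝ => 2*Real.pi * ∫ z in (-h)..h,
          (Real.cosh (a*z) * c / Real.cosh (a*h)) *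
          Real.sqrt ((a * Real.sinh (a*z) * c / Real.cosh (a*h))^2 + 1)) := by
      funext a
      congr 1
      apply intervalIntegral.integral_congr
      intro z _
      simp only [hderiv]
    rw [heq]
    have hval : 2*Real.pi * ∫ _ in (-h)..h, c = 4*Real.pi*h*c := by
      rw [intervalIntegral.integral_const]
      simp [smul_eq_mul]
      ring
    rw [← hval]
    exact key2
  · have hkey : 2*h*c ≤ 1 := by
      nlinarith [sq_nonneg (2*h*c - 1), sq_nonneg (2*h^2 - 1)]
    nlinarith [Real.pi_pos]
end
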